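/- arXiv:0904.0069 — 5 statements merged into one kernel-verified Lean document; each statement's English description precedes it below -/
import Mathlib

section
/- Let (C̄¹,d̄¹) be a strong deformation retract of a complex (C¹,d¹) of F2-vector spaces, with inclusion j, retraction r and normalized homotopy h (i.e. h∘h = 0, r∘h = 0, h∘j = 0). Let f : (C⁰,d⁰) → (C¹,d¹) be a morphism of complexes. Then Cone(r∘f) is a strong deformation retract of Cone(f), with retraction R(x,y) = (x, r y), inclusion J(x,y) = (x, h(f(x)) + j(y)), and homotopy H(x,y) = (0, h(y)); moreover this homotopy is normalized: H∘H = 0, R∘H = 0 and H∘J = 0. -/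
/-!
Every identity is checked on pairs `(x, y)`. Characteristic 2 enters twice: in `D² (x, y)` the
terms `f (d⁰ x)` and `d¹ (f x)` cancel, and `J` commutes with the differentials because
expanding `j r = id + h d¹ + d¹ h` inside `J (D (x, y))` produces `h (d¹ (f x)) = h (f (d⁰ x))`
twice.
-/

/-- The differential of the cone of a morphism of complexes `f : (C0,d0) → (C1,d1)`,
from the piece `C0 (i+1) × C1 i` (of degree `i+1`) to the piece of degree `i+2`. -/
def coneD (C0 C1 : ℤ → Type)
    [∀ i, AddCommGroup (C0 i)] [∀ i, Module (ZMod 2) (C0 i)]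
    [∀ i, AddCommGroup (C1 i)] [∀ i, Module (ZMod 2) (C1 i)]
    (d0 : ∀ i, C0 i →ₗ[ZMod 2] C0 (i+1))
    (d1 : ∀ i, C1 i →ₗ[ZMod 2] C1 (i+1))
    (f : ∀ i, C0 i →ₗ[ZMod 2] C1 i) (i : ℤ) :
    (C0 (i+1) × C1 i) →ₗ[ZMod 2] (C0 (i+1+1) × C1 (i+1)) :=
  LinearMap.prod ((d0 (i+1)) ∘ₗ (LinearMap.fst (ZMod 2) (C0 (i+1)) (C1 i)))
    (((f (i+1)) ∘ₗ (LinearMap.fst (ZMod 2) (C0 (i+1)) (C1 i))) +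
      ((d1 i) ∘ₗ (LinearMap.snd (ZMod 2) (C0 (i+1)) (C1 i))))

/-- The retraction `R(x,y) = (x, r y)` on cones. -/
def coneR (C0 C1 Cb : ℤ → Type)
    [∀ i, AddCommGroup (C0 i)] [∀ i, Module (ZMod 2) (C0 i)]
    [∀ i, AddCommGroup (C1 i)] [∀ i, Module (ZMod 2) (C1 i)]
    [∀ i, AddCommGroup (Cb i)] [∀ i, Module (ZMod 2) (Cb i)]
    (r : ∀ i, C1 i →ₗ[ZMod 2] Cb i) (i : ℤ) :
    (C0 (i+1) × C1 i) →ₗ[ZMod 2] (C0 (i+1) × Cb i) :=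
  LinearMap.prodMap LinearMap.id (r i)

/-- The inclusion `J(x,y) = (x, h (f x) + j y)` on cones. -/
def coneJ (C0 C1 Cb : ℤ → Type)
    [∀ i, AddCommGroup (C0 i)] [∀ i, Module (ZMod 2) (C0 i)]
    [∀ i, AddCommGroup (C1 i)] [∀ i, Module (ZMod 2) (C1 i)]
    [∀ i, AddCommGroup (Cb i)] [∀ i, Module (ZMod 2) (Cb i)]
    (f : ∀ i, C0 i →ₗ[ZMod 2] C1 i)
    (j : ∀ i, Cb i →ₗ[ZMod 2] C1 i)
    (h : ∀ i, C1 (i+1) →ₗ[ZMod 2] C1 i) (i : ℤ) :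
    (C0 (i+1) × Cb i) →ₗ[ZMod 2] (C0 (i+1) × C1 i) :=
  LinearMap.prod (LinearMap.fst (ZMod 2) (C0 (i+1)) (Cb i))
    (((h i) ∘ₗ (f (i+1)) ∘ₗ (LinearMap.fst (ZMod 2) (C0 (i+1)) (Cb i))) +
      ((j i) ∘ₗ (LinearMap.snd (ZMod 2) (C0 (i+1)) (Cb i))))

/-- The homotopy `H(x,y) = (0, h y)` on cones. -/
def coneH (C0 C1 : ℤ → Type)
    [∀ i, AddCommGroup (C0 i)] [∀ i, Module (ZMod 2) (C0 i)]
    [∀ i, AddCommGroup (C1 i)] [∀ i, Module (ZMod 2) (C1 i)]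
    (h : ∀ i, C1 (i+1) →ₗ[ZMod 2] C1 i) (i : ℤ) :
    (C0 (i+1+1) × C1 (i+1)) →ₗ[ZMod 2] (C0 (i+1) × C1 i) :=
  LinearMap.prod 0 ((h i) ∘ₗ (LinearMap.snd (ZMod 2) (C0 (i+1+1)) (C1 (i+1))))

section Cone

variable {C0 C1 Cb : ℤ → Type}
  [∀ i, AddCommGroup (C0 i)] [∀ i, Module (ZMod 2) (C0 i)]
  [∀ i, AddCommGroup (C1 i)] [∀ i, Module (ZMod 2) (C1 i)]
  [∀ i, AddCommGroup (Cb i)] [∀ i, Module (ZMod 2) (Cb i)]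

@[simp]
theorem coneD_apply (d0 : ∀ i, C0 i →ₗ[ZMod 2] C0 (i+1)) (d1 : ∀ i, C1 i →ₗ[ZMod 2] C1 (i+1))
    (f : ∀ i, C0 i →ₗ[ZMod 2] C1 i) (i : ℤ) (x : C0 (i+1)) (y : C1 i) :
    coneD C0 C1 d0 d1 f i (x, y) = (d0 (i+1) x, f (i+1) x + d1 i y) :=
  rfl

@[simp]
theorem coneR_apply (r : ∀ i, C1 i →ₗ[ZMod 2] Cb i) (i : ℤ) (x : C0 (i+1)) (y : C1 i) :
    coneR C0 C1 Cb r i (x, y) = (x, r i y) :=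
  rfl

@[simp]
theorem coneJ_apply (f : ∀ i, C0 i →ₗ[ZMod 2] C1 i) (j : ∀ i, Cb i →ₗ[ZMod 2] C1 i)
    (h : ∀ i, C1 (i+1) →ₗ[ZMod 2] C1 i) (i : ℤ) (x : C0 (i+1)) (y : Cb i) :
    coneJ C0 C1 Cb f j h i (x, y) = (x, h i (f (i+1) x) + j i y) :=
  rfl

@[simp]
theorem coneH_apply (h : ∀ i, C1 (i+1) →ₗ[ZMod 2] C1 i) (i : ℤ) (x : C0 (i+1+1))
    (y : C1 (i+1)) :
    coneH C0 C1 h i (x, y) = (0, h i y) :=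
  rfl

theorem coneD_comp_coneD (d0 : ∀ i, C0 i →ₗ[ZMod 2] C0 (i+1))
    (d1 : ∀ i, C1 i →ₗ[ZMod 2] C1 (i+1)) (f : ∀ i, C0 i →ₗ[ZMod 2] C1 i)
    (hd0 : ∀ i, d0 (i+1) ∘ₗ d0 i = 0) (hd1 : ∀ i, d1 (i+1) ∘ₗ d1 i = 0)
    (hf : ∀ i, d1 i ∘ₗ f i = f (i+1) ∘ₗ d0 i) (i : ℤ) :
    coneD C0 C1 d0 d1 f (i+1) ∘ₗ coneD C0 C1 d0 d1 f i = 0 := by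
  simp only [LinearMap.ext_iff, LinearMap.comp_apply, LinearMap.zero_apply] at hd0 hd1 hf
  refine LinearMap.ext fun ⟨x, y⟩ => ?_
  simp [hd0, hd1, hf, ZModModule.add_self]

theorem coneD_comp_coneR (d0 : ∀ i, C0 i →ₗ[ZMod 2] C0 (i+1))
    (d1 : ∀ i, C1 i →ₗ[ZMod 2] C1 (i+1)) (db : ∀ i, Cb i →ₗ[ZMod 2] Cb (i+1))
    (f : ∀ i, C0 i →ₗ[ZMod 2] C1 i) (r : ∀ i, C1 i →ₗ[ZMod 2] Cb i)
    (hr : ∀ i, db i ∘ₗ r i = r (i+1) ∘ₗ d1 i) (i : ℤ) :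
    coneD C0 Cb d0 db (fun i => r i ∘ₗ f i) i ∘ₗ coneR C0 C1 Cb r i =
      coneR C0 C1 Cb r (i+1) ∘ₗ coneD C0 C1 d0 d1 f i := by
  simp only [LinearMap.ext_iff, LinearMap.comp_apply] at hr
  refine LinearMap.ext fun ⟨x, y⟩ => ?_
  simp [hr]

theorem coneD_comp_coneJ (d0 : ∀ i, C0 i →ₗ[ZMod 2] C0 (i+1))
    (d1 : ∀ i, C1 i →ₗ[ZMod 2] C1 (i+1)) (db : ∀ i, Cb i →ₗ[ZMod 2] Cb (i+1))
    (f : ∀ i, C0 i →ₗ[ZMod 2] C1 i) (j : ∀ i, Cb i →ₗ[ZMod 2] C1 i)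
    (r : ∀ i, C1 i →ₗ[ZMod 2] Cb i) (h : ∀ i, C1 (i+1) →ₗ[ZMod 2] C1 i)
    (hj : ∀ i, d1 i ∘ₗ j i = j (i+1) ∘ₗ db i)
    (hjr : ∀ i, j (i+1) ∘ₗ r (i+1) = LinearMap.id + h (i+1) ∘ₗ d1 (i+1) + d1 i ∘ₗ h i)
    (hf : ∀ i, d1 i ∘ₗ f i = f (i+1) ∘ₗ d0 i) (i : ℤ) :
    coneD C0 C1 d0 d1 f i ∘ₗ coneJ C0 C1 Cb f j h i =
      coneJ C0 C1 Cb f j h (i+1) ∘ₗ coneD C0 Cb d0 db (fun i => r i ∘ₗ f i) i := by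
  simp only [LinearMap.ext_iff, LinearMap.comp_apply, LinearMap.add_apply,
    LinearMap.id_apply] at hj hjr hf
  refine LinearMap.ext fun ⟨x, y⟩ => ?_
  simp only [LinearMap.comp_apply, coneD_apply, coneJ_apply, map_add, hj, hjr, hf, Prod.mk.injEq,
    true_and]
  linear_combination (norm := module) -ZModModule.add_self (h (i+1) (f (i+1+1) (d0 (i+1) x)))

theorem coneR_comp_coneJ (f : ∀ i, C0 i →ₗ[ZMod 2] C1 i) (j : ∀ i, Cb i →ₗ[ZMod 2] C1 i)
    (r : ∀ i, C1 i →ₗ[ZMod 2] Cb i) (h : ∀ i, C1 (i+1) →ₗ[ZMod 2] C1 i)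
    (hrj : ∀ i, r i ∘ₗ j i = LinearMap.id) (hrh : ∀ i, r i ∘ₗ h i = 0) (i : ℤ) :
    coneR C0 C1 Cb r i ∘ₗ coneJ C0 C1 Cb f j h i = LinearMap.id := by
  simp only [LinearMap.ext_iff, LinearMap.comp_apply, LinearMap.id_apply,
    LinearMap.zero_apply] at hrj hrh
  refine LinearMap.ext fun ⟨x, y⟩ => ?_
  simp [hrj, hrh]

theorem coneJ_comp_coneR (d0 : ∀ i, C0 i →ₗ[ZMod 2] C0 (i+1))
    (d1 : ∀ i, C1 i →ₗ[ZMod 2] C1 (i+1)) (f : ∀ i, C0 i →ₗ[ZMod 2] C1 i)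
    (j : ∀ i, Cb i →ₗ[ZMod 2] C1 i) (r : ∀ i, C1 i →ₗ[ZMod 2] Cb i)
    (h : ∀ i, C1 (i+1) →ₗ[ZMod 2] C1 i)
    (hjr : ∀ i, j (i+1) ∘ₗ r (i+1) = LinearMap.id + h (i+1) ∘ₗ d1 (i+1) + d1 i ∘ₗ h i)
    (i : ℤ) :
    coneJ C0 C1 Cb f j h (i+1) ∘ₗ coneR C0 C1 Cb r (i+1) =
      LinearMap.id + coneH C0 C1 h (i+1) ∘ₗ coneD C0 C1 d0 d1 f (i+1) +
        coneD C0 C1 d0 d1 f i ∘ₗ coneH C0 C1 h i := by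
  simp only [LinearMap.ext_iff, LinearMap.comp_apply, LinearMap.add_apply,
    LinearMap.id_apply] at hjr
  refine LinearMap.ext fun ⟨x, y⟩ => ?_
  simp [hjr]
  abel

theorem coneH_comp_coneH (h : ∀ i, C1 (i+1) →ₗ[ZMod 2] C1 i)
    (hhh : ∀ i, h i ∘ₗ h (i+1) = 0) (i : ℤ) :
    coneH C0 C1 h i ∘ₗ coneH C0 C1 h (i+1) = 0 := by
  simp only [LinearMap.ext_iff, LinearMap.comp_apply, LinearMap.zero_apply] at hhh
  refine LinearMap.ext fun ⟨x, y⟩ => ?_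
  simp [hhh]

theorem coneR_comp_coneH (r : ∀ i, C1 i →ₗ[ZMod 2] Cb i) (h : ∀ i, C1 (i+1) →ₗ[ZMod 2] C1 i)
    (hrh : ∀ i, r i ∘ₗ h i = 0) (i : ℤ) :
    coneR C0 C1 Cb r i ∘ₗ coneH C0 C1 h i = 0 := by
  simp only [LinearMap.ext_iff, LinearMap.comp_apply, LinearMap.zero_apply] at hrh
  refine LinearMap.ext fun ⟨x, y⟩ => ?_
  simp [hrh]

theorem coneH_comp_coneJ (f : ∀ i, C0 i →ₗ[ZMod 2] C1 i) (j : ∀ i, Cb i →ₗ[ZMod 2] C1 i)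
    (h : ∀ i, C1 (i+1) →ₗ[ZMod 2] C1 i)
    (hhh : ∀ i, h i ∘ₗ h (i+1) = 0) (hhj : ∀ i, h i ∘ₗ j (i+1) = 0) (i : ℤ) :
    coneH C0 C1 h i ∘ₗ coneJ C0 C1 Cb f j h (i+1) = 0 := by
  simp only [LinearMap.ext_iff, LinearMap.comp_apply, LinearMap.zero_apply] at hhh hhj
  refine LinearMap.ext fun ⟨x, y⟩ => ?_
  simp [hhh, hhj]

end Cone

theorem stmt_0 (C0 C1 Cb : ℤ → Type)
    [∀ i, AddCommGroup (C0 i)] [∀ i, Module (ZMod 2) (C0 i)]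
    [∀ i, AddCommGroup (C1 i)] [∀ i, Module (ZMod 2) (C1 i)]
    [∀ i, AddCommGroup (Cb i)] [∀ i, Module (ZMod 2) (Cb i)]
    -- the three complexes
    (d0 : ∀ i, C0 i →ₗ[ZMod 2] C0 (i+1))
    (d1 : ∀ i, C1 i →ₗ[ZMod 2] C1 (i+1))
    (db : ∀ i, Cb i →ₗ[ZMod 2] Cb (i+1))
    (hd0 : ∀ i, (d0 (i+1)) ∘ₗ (d0 i) = 0)
    (hd1 : ∀ i, (d1 (i+1)) ∘ₗ (d1 i) = 0)
    (hdb : ∀ i, (db (i+1)) ∘ₗ (db i) = 0)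
    -- (C̄¹,d̄¹) = (Cb,db) is a strong deformation retract of (C¹,d¹) = (C1,d1)
    (j : ∀ i, Cb i →ₗ[ZMod 2] C1 i)
    (r : ∀ i, C1 i →ₗ[ZMod 2] Cb i)
    (h : ∀ i, C1 (i+1) →ₗ[ZMod 2] C1 i)
    (hjchain : ∀ i, (d1 i) ∘ₗ (j i) = (j (i+1)) ∘ₗ (db i))
    (hrchain : ∀ i, (db i) ∘ₗ (r i) = (r (i+1)) ∘ₗ (d1 i))
    (hrj : ∀ i, (r i) ∘ₗ (j i) = LinearMap.id)
    (hjr : ∀ i, (j (i+1)) ∘ₗ (r (i+1)) =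
      LinearMap.id + (h (i+1)) ∘ₗ (d1 (i+1)) + (d1 i) ∘ₗ (h i))
    -- the homotopy is normalized
    (hhh : ∀ i, (h i) ∘ₗ (h (i+1)) = 0)
    (hrh : ∀ i, (r i) ∘ₗ (h i) = 0)
    (hhj : ∀ i, (h i) ∘ₗ (j (i+1)) = 0)
    -- a morphism of complexes f : (C⁰,d⁰) → (C¹,d¹)
    (f : ∀ i, C0 i →ₗ[ZMod 2] C1 i)
    (hfchain : ∀ i, (d1 i) ∘ₗ (f i) = (f (i+1)) ∘ₗ (d0 i)) :
    -- Cone(r∘f) is a complex and a strong deformation retract of Cone(f)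
    (∀ i, (coneD C0 C1 d0 d1 f (i+1)) ∘ₗ (coneD C0 C1 d0 d1 f i) = 0) ∧
    (∀ i, (coneD C0 Cb d0 db (fun i => (r i) ∘ₗ (f i)) (i+1)) ∘ₗ
        (coneD C0 Cb d0 db (fun i => (r i) ∘ₗ (f i)) i) = 0) ∧
    -- R is a morphism of complexes
    (∀ i, (coneD C0 Cb d0 db (fun i => (r i) ∘ₗ (f i)) i) ∘ₗ (coneR C0 C1 Cb r i) =
      (coneR C0 C1 Cb r (i+1)) ∘ₗ (coneD C0 C1 d0 d1 f i)) ∧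
    -- J is a morphism of complexes
    (∀ i, (coneD C0 C1 d0 d1 f i) ∘ₗ (coneJ C0 C1 Cb f j h i) =
      (coneJ C0 C1 Cb f j h (i+1)) ∘ₗ (coneD C0 Cb d0 db (fun i => (r i) ∘ₗ (f i)) i)) ∧
    -- R ∘ J = id
    (∀ i, (coneR C0 C1 Cb r i) ∘ₗ (coneJ C0 C1 Cb f j h i) = LinearMap.id) ∧
    -- J ∘ R = id + H ∘ D + D ∘ H
    (∀ i, (coneJ C0 C1 Cb f j h (i+1)) ∘ₗ (coneR C0 C1 Cb r (i+1)) =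
      LinearMap.id + (coneH C0 C1 h (i+1)) ∘ₗ (coneD C0 C1 d0 d1 f (i+1)) +
        (coneD C0 C1 d0 d1 f i) ∘ₗ (coneH C0 C1 h i)) ∧
    -- the homotopy H is normalized
    (∀ i, (coneH C0 C1 h i) ∘ₗ (coneH C0 C1 h (i+1)) = 0) ∧
    (∀ i, (coneR C0 C1 Cb r i) ∘ₗ (coneH C0 C1 h i) = 0) ∧
    (∀ i, (coneH C0 C1 h i) ∘ₗ (coneJ C0 C1 Cb f j h (i+1)) = 0) := by
  have hrf_chain : ∀ i, db i ∘ₗ (r i ∘ₗ f i) = (r (i+1) ∘ₗ f (i+1)) ∘ₗ d0 i := fun i => by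
    rw [← LinearMap.comp_assoc, hrchain, LinearMap.comp_assoc, hfchain, LinearMap.comp_assoc]
  exact ⟨coneD_comp_coneD d0 d1 f hd0 hd1 hfchain,
    coneD_comp_coneD d0 db _ hd0 hdb hrf_chain,
    coneD_comp_coneR d0 d1 db f r hrchain,
    coneD_comp_coneJ d0 d1 db f j r h hjchain hjr hfchain,
    coneR_comp_coneJ f j r h hrj hrh,
    coneJ_comp_coneR d0 d1 f j r h hjr,
    coneH_comp_coneH h hhh,
    coneR_comp_coneH r h hrh,
    coneH_comp_coneJ f j h hhh hhj⟩
end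

section
/- The maps μ₂, δ₂, η₂, ε₂ defined on B via ι and π satisfy the explicit formulas μ₂(w₊⊗w₊)=w₊, μ₂(w₊⊗w₋)=μ₂(w₋⊗w₊)=w₋, μ₂(w₋⊗w₋)=0, δ₂(w₊)=w₊⊗w₋+w₋⊗w₊, δ₂(w₋)=w₋⊗w₋, η₂(1)=w₊, ε₂(w₊)=0, ε₂(w₋)=1, and they make B a commutative Frobenius algebra: μ₂∘φ₂ = μ₂, μ₂∘(μ₂⊗id_B) = μ₂∘(id_B⊗μ₂), μ₂∘(η₂⊗id_B) = id_B, φ₂∘δ₂ = δ₂, (δ₂⊗id_B)∘δ₂ = (id_B⊗δ₂)∘δ₂, (ε₂⊗id_B)∘δ₂ = id_B, and δ₂∘μ₂ = (μ₂⊗id_B)∘(id_B⊗δ₂). -/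
/-!
Restricted to the diagonal span of `v₊ ⊗ v₊` and `v₋ ⊗ v₋`, the structure maps of `A ⊗ A`
act coordinatewise, so in the basis `(w₋, w₊)` the induced maps on `B` are given by exactly
the same formulas as those of `A`: `B` is again Khovanov's Frobenius algebra `R[X]/(X²)` with
`w₊ = 1` and `w₋ = X`. Each Frobenius algebra axiom is an identity of linear maps, hence can be
checked on tensors of basis vectors, where it is a finite computation with these formulas.
-/

open TensorProduct

namespace Module.Basis

variable {R M : Type*} [CommSemiring R] [AddCommMonoid M] [Module R M]

/-- The structure maps of Khovanov's algebra `R[X]/(X²)`, with `b 1 = 1` and `b 0 = X`. -/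
structure IsKhovanovStructure (b : Basis (Fin 2) R M) (μ : M ⊗[R] M →ₗ[R] M)
    (η : R →ₗ[R] M) (δ : M →ₗ[R] M ⊗[R] M) (ε : M →ₗ[R] R) : Prop where
  mul_one_one : μ (b 1 ⊗ₜ b 1) = b 1
  mul_one_X : μ (b 1 ⊗ₜ b 0) = b 0
  mul_X_one : μ (b 0 ⊗ₜ b 1) = b 0
  mul_X_X : μ (b 0 ⊗ₜ b 0) = 0
  comul_one : δ (b 1) = b 1 ⊗ₜ b 0 + b 0 ⊗ₜ b 1
  comul_X : δ (b 0) = b 0 ⊗ₜ b 0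
  unit_one : η 1 = b 1
  counit_one : ε (b 1) = 0
  counit_X : ε (b 0) = 1

namespace IsKhovanovStructure

variable {b : Basis (Fin 2) R M} {μ : M ⊗[R] M →ₗ[R] M} {η : R →ₗ[R] M}
  {δ : M →ₗ[R] M ⊗[R] M} {ε : M →ₗ[R] R}

theorem mul_comm (h : IsKhovanovStructure b μ η δ ε) :
    μ ∘ₗ (TensorProduct.comm R M M).toLinearMap = μ := by
  refine (b.tensorProduct b).ext fun ⟨i, j⟩ => ?_
  fin_cases i <;> fin_cases j <;>
    simp [tensorProduct_apply, h.mul_one_X, h.mul_X_one]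

theorem mul_assoc (h : IsKhovanovStructure b μ η δ ε) :
    μ ∘ₗ map μ LinearMap.id =
      (μ ∘ₗ map LinearMap.id μ) ∘ₗ (TensorProduct.assoc R M M M).toLinearMap := by
  refine ((b.tensorProduct b).tensorProduct b).ext fun ⟨⟨i, j⟩, k⟩ => ?_
  fin_cases i <;> fin_cases j <;> fin_cases k <;>
    simp [tensorProduct_apply, h.mul_one_one, h.mul_one_X, h.mul_X_one, h.mul_X_X]

theorem one_mul (h : IsKhovanovStructure b μ η δ ε) :
    μ ∘ₗ map η LinearMap.id ∘ₗ (TensorProduct.lid R M).symm.toLinearMap = LinearMap.id := by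
  refine b.ext fun i => ?_
  fin_cases i <;> simp [h.unit_one, h.mul_one_one, h.mul_one_X]

theorem comul_comm (h : IsKhovanovStructure b μ η δ ε) :
    (TensorProduct.comm R M M).toLinearMap ∘ₗ δ = δ := by
  refine b.ext fun i => ?_
  fin_cases i <;> simp [h.comul_one, h.comul_X, add_comm]

theorem comul_coassoc (h : IsKhovanovStructure b μ η δ ε) :
    (TensorProduct.assoc R M M M).toLinearMap ∘ₗ map δ LinearMap.id ∘ₗ δ =
      map LinearMap.id δ ∘ₗ δ := by
  refine b.ext fun i => ?_
  fin_cases i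
  · simp [h.comul_X]
  · simp [h.comul_one, h.comul_X, tmul_add, add_tmul]
    abel

theorem counit_comul (h : IsKhovanovStructure b μ η δ ε) :
    (TensorProduct.lid R M).toLinearMap ∘ₗ map ε LinearMap.id ∘ₗ δ = LinearMap.id := by
  refine b.ext fun i => ?_
  fin_cases i <;> simp [h.comul_one, h.comul_X, h.counit_one, h.counit_X]

theorem frobenius (h : IsKhovanovStructure b μ η δ ε) :
    δ ∘ₗ μ = map μ LinearMap.id ∘ₗ (TensorProduct.assoc R M M M).symm.toLinearMap ∘ₗ
      map LinearMap.id δ := by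
  refine (b.tensorProduct b).ext fun ⟨i, j⟩ => ?_
  fin_cases i <;> fin_cases j <;>
    simp [tensorProduct_apply, h.mul_one_one, h.mul_one_X, h.mul_X_one, h.mul_X_X, h.comul_one,
      h.comul_X, tmul_add]

end IsKhovanovStructure

end Module.Basis

open Module.Basis

theorem stmt_8_general (A : Type) [AddCommGroup A] [Module (ZMod 2) A]
    (B : Type) [AddCommGroup B] [Module (ZMod 2) B]
    (vm vp : A)
    (wm wp : B) (bB : Module.Basis (Fin 2) (ZMod 2) B)
    (hbB0 : bB 0 = wm) (hbB1 : bB 1 = wp)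
    (μ₁ : A ⊗[ZMod 2] A →ₗ[ZMod 2] A)
    (hμpp : μ₁ (vp ⊗ₜ vp) = vp) (hμpm : μ₁ (vp ⊗ₜ vm) = vm)
    (hμmp : μ₁ (vm ⊗ₜ vp) = vm) (hμmm : μ₁ (vm ⊗ₜ vm) = 0)
    (η₁ : ZMod 2 →ₗ[ZMod 2] A) (hη₁ : η₁ 1 = vp)
    (δ₁ : A →ₗ[ZMod 2] A ⊗[ZMod 2] A)
    (hδp : δ₁ vp = vp ⊗ₜ vm + vm ⊗ₜ vp) (hδm : δ₁ vm = vm ⊗ₜ vm)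
    (ε₁ : A →ₗ[ZMod 2] ZMod 2) (hε₁p : ε₁ vp = 0) (hε₁m : ε₁ vm = 1)
    (ι : B →ₗ[ZMod 2] A ⊗[ZMod 2] A)
    (hιp : ι wp = vp ⊗ₜ vp) (hιm : ι wm = vm ⊗ₜ vm)
    (π : A ⊗[ZMod 2] A →ₗ[ZMod 2] B)
    (hπpp : π (vp ⊗ₜ vp) = wp) (hπmm : π (vm ⊗ₜ vm) = wm)
    (hπpm : π (vp ⊗ₜ vm) = 0) (hπmp : π (vm ⊗ₜ vp) = 0)
    -- the middle flip id⊗φ₁⊗id on (A⊗A)⊗(A⊗A)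
    (mflip : (A ⊗[ZMod 2] A) ⊗[ZMod 2] (A ⊗[ZMod 2] A) →ₗ[ZMod 2]
      (A ⊗[ZMod 2] A) ⊗[ZMod 2] (A ⊗[ZMod 2] A))
    (hmflip : ∀ a a' c c' : A, mflip ((a ⊗ₜ a') ⊗ₜ (c ⊗ₜ c')) = (a ⊗ₜ c) ⊗ₜ (a' ⊗ₜ c'))
    (μ₂ : B ⊗[ZMod 2] B →ₗ[ZMod 2] B)
    (hμ₂ : μ₂ = π ∘ₗ (TensorProduct.map μ₁ μ₁) ∘ₗ mflip ∘ₗ (TensorProduct.map ι ι))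
    (δ₂ : B →ₗ[ZMod 2] B ⊗[ZMod 2] B)
    (hδ₂ : δ₂ = (TensorProduct.map π π) ∘ₗ mflip ∘ₗ (TensorProduct.map δ₁ δ₁) ∘ₗ ι)
    (η₂ : ZMod 2 →ₗ[ZMod 2] B)
    (hη₂ : η₂ = π ∘ₗ (TensorProduct.map η₁ η₁) ∘ₗ
      (TensorProduct.lid (ZMod 2) (ZMod 2)).symm.toLinearMap)
    (ε₂ : B →ₗ[ZMod 2] ZMod 2)
    (hε₂ : ε₂ = (TensorProduct.lid (ZMod 2) (ZMod 2)).toLinearMap ∘ₗ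
      (TensorProduct.map ε₁ ε₁) ∘ₗ ι)
    (φ₂ : B ⊗[ZMod 2] B →ₗ[ZMod 2] B ⊗[ZMod 2] B)
    (hφ₂ : ∀ x y : B, φ₂ (x ⊗ₜ y) = y ⊗ₜ x) :
    μ₂ (wp ⊗ₜ wp) = wp ∧ μ₂ (wp ⊗ₜ wm) = wm ∧ μ₂ (wm ⊗ₜ wp) = wm ∧ μ₂ (wm ⊗ₜ wm) = 0 ∧
    δ₂ wp = wp ⊗ₜ wm + wm ⊗ₜ wp ∧ δ₂ wm = wm ⊗ₜ wm ∧
    η₂ 1 = wp ∧ ε₂ wp = 0 ∧ ε₂ wm = 1 ∧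
    μ₂ ∘ₗ φ₂ = μ₂ ∧
    μ₂ ∘ₗ TensorProduct.map μ₂ LinearMap.id =
      (μ₂ ∘ₗ TensorProduct.map LinearMap.id μ₂) ∘ₗ
        (TensorProduct.assoc (ZMod 2) B B B).toLinearMap ∧
    μ₂ ∘ₗ TensorProduct.map η₂ LinearMap.id ∘ₗ
        (TensorProduct.lid (ZMod 2) B).symm.toLinearMap = LinearMap.id ∧
    φ₂ ∘ₗ δ₂ = δ₂ ∧
    (TensorProduct.assoc (ZMod 2) B B B).toLinearMap ∘ₗ
        (TensorProduct.map δ₂ LinearMap.id) ∘ₗ δ₂ =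
      (TensorProduct.map LinearMap.id δ₂) ∘ₗ δ₂ ∧
    (TensorProduct.lid (ZMod 2) B).toLinearMap ∘ₗ
        (TensorProduct.map ε₂ LinearMap.id) ∘ₗ δ₂ = LinearMap.id ∧
    δ₂ ∘ₗ μ₂ =
      (TensorProduct.map μ₂ LinearMap.id) ∘ₗ
        (TensorProduct.assoc (ZMod 2) B B B).symm.toLinearMap ∘ₗ
        (TensorProduct.map LinearMap.id δ₂) := by
  obtain rfl : φ₂ = (TensorProduct.comm (ZMod 2) B B).toLinearMap := ext' hφ₂
  subst hbB0 hbB1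
  have hB : IsKhovanovStructure bB μ₂ η₂ δ₂ ε₂ :=
    { mul_one_one := by simp [hμ₂, hιp, hmflip, hμpp, hπpp]
      mul_one_X := by simp [hμ₂, hιp, hιm, hmflip, hμpm, hπmm]
      mul_X_one := by simp [hμ₂, hιp, hιm, hmflip, hμmp, hπmm]
      mul_X_X := by simp [hμ₂, hιm, hmflip, hμmm]
      comul_one := by
        simp [hδ₂, hιp, hδp, tmul_add, add_tmul, hmflip, hπpp, hπmm, hπpm, hπmp]
      comul_X := by simp [hδ₂, hιm, hδm, hmflip, hπmm]
      unit_one := by simp [hη₂, hη₁, hπpp]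
      counit_one := by simp [hε₂, hιp, hε₁p]
      counit_X := by simp [hε₂, hιm, hε₁m] }
  exact ⟨hB.mul_one_one, hB.mul_one_X, hB.mul_X_one, hB.mul_X_X, hB.comul_one, hB.comul_X,
    hB.unit_one, hB.counit_one, hB.counit_X, hB.mul_comm, hB.mul_assoc, hB.one_mul,
    hB.comul_comm, hB.comul_coassoc, hB.counit_comul, hB.frobenius⟩

/-- the structure maps μ₂, δ₂, η₂, ε₂ induced on B via ι and π satisfy
explicit formulas and make B a commutative Frobenius algebra. -/
theorem stmt_8 (A : Type) [AddCommGroup A] [Module (ZMod 2) A]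
    (B : Type) [AddCommGroup B] [Module (ZMod 2) B]
    (vm vp : A) (bA : Module.Basis (Fin 2) (ZMod 2) A)
    (hbA0 : bA 0 = vm) (hbA1 : bA 1 = vp)
    (wm wp : B) (bB : Module.Basis (Fin 2) (ZMod 2) B)
    (hbB0 : bB 0 = wm) (hbB1 : bB 1 = wp)
    (μ₁ : A ⊗[ZMod 2] A →ₗ[ZMod 2] A)
    (hμpp : μ₁ (vp ⊗ₜ vp) = vp) (hμpm : μ₁ (vp ⊗ₜ vm) = vm)
    (hμmp : μ₁ (vm ⊗ₜ vp) = vm) (hμmm : μ₁ (vm ⊗ₜ vm) = 0)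
    (η₁ : ZMod 2 →ₗ[ZMod 2] A) (hη₁ : η₁ 1 = vp)
    (δ₁ : A →ₗ[ZMod 2] A ⊗[ZMod 2] A)
    (hδp : δ₁ vp = vp ⊗ₜ vm + vm ⊗ₜ vp) (hδm : δ₁ vm = vm ⊗ₜ vm)
    (ε₁ : A →ₗ[ZMod 2] ZMod 2) (hε₁p : ε₁ vp = 0) (hε₁m : ε₁ vm = 1)
    (φ₁ : A ⊗[ZMod 2] A →ₗ[ZMod 2] A ⊗[ZMod 2] A)
    (hφ₁ : ∀ x y : A, φ₁ (x ⊗ₜ y) = y ⊗ₜ x)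
    (ι : B →ₗ[ZMod 2] A ⊗[ZMod 2] A)
    (hιp : ι wp = vp ⊗ₜ vp) (hιm : ι wm = vm ⊗ₜ vm)
    (π : A ⊗[ZMod 2] A →ₗ[ZMod 2] B)
    (hπpp : π (vp ⊗ₜ vp) = wp) (hπmm : π (vm ⊗ₜ vm) = wm)
    (hπpm : π (vp ⊗ₜ vm) = 0) (hπmp : π (vm ⊗ₜ vp) = 0)
    -- the middle flip id⊗φ₁⊗id on (A⊗A)⊗(A⊗A)
    (mflip : (A ⊗[ZMod 2] A) ⊗[ZMod 2] (A ⊗[ZMod 2] A) →ₗ[ZMod 2]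
      (A ⊗[ZMod 2] A) ⊗[ZMod 2] (A ⊗[ZMod 2] A))
    (hmflip : ∀ a a' c c' : A, mflip ((a ⊗ₜ a') ⊗ₜ (c ⊗ₜ c')) = (a ⊗ₜ c) ⊗ₜ (a' ⊗ₜ c'))
    (μ₂ : B ⊗[ZMod 2] B →ₗ[ZMod 2] B)
    (hμ₂ : μ₂ = π ∘ₗ (TensorProduct.map μ₁ μ₁) ∘ₗ mflip ∘ₗ (TensorProduct.map ι ι))
    (δ₂ : B →ₗ[ZMod 2] B ⊗[ZMod 2] B)
    (hδ₂ : δ₂ = (TensorProduct.map π π) ∘ₗ mflip ∘ₗ (TensorProduct.map δ₁ δ₁) ∘ₗ ι)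
    (η₂ : ZMod 2 →ₗ[ZMod 2] B)
    (hη₂ : η₂ = π ∘ₗ (TensorProduct.map η₁ η₁) ∘ₗ
      (TensorProduct.lid (ZMod 2) (ZMod 2)).symm.toLinearMap)
    (ε₂ : B →ₗ[ZMod 2] ZMod 2)
    (hε₂ : ε₂ = (TensorProduct.lid (ZMod 2) (ZMod 2)).toLinearMap ∘ₗ
      (TensorProduct.map ε₁ ε₁) ∘ₗ ι)
    (φ₂ : B ⊗[ZMod 2] B →ₗ[ZMod 2] B ⊗[ZMod 2] B)
    (hφ₂ : ∀ x y : B, φ₂ (x ⊗ₜ y) = y ⊗ₜ x) :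
    μ₂ (wp ⊗ₜ wp) = wp ∧ μ₂ (wp ⊗ₜ wm) = wm ∧ μ₂ (wm ⊗ₜ wp) = wm ∧ μ₂ (wm ⊗ₜ wm) = 0 ∧
    δ₂ wp = wp ⊗ₜ wm + wm ⊗ₜ wp ∧ δ₂ wm = wm ⊗ₜ wm ∧
    η₂ 1 = wp ∧ ε₂ wp = 0 ∧ ε₂ wm = 1 ∧
    μ₂ ∘ₗ φ₂ = μ₂ ∧
    μ₂ ∘ₗ TensorProduct.map μ₂ LinearMap.id =
      (μ₂ ∘ₗ TensorProduct.map LinearMap.id μ₂) ∘ₗ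
        (TensorProduct.assoc (ZMod 2) B B B).toLinearMap ∧
    μ₂ ∘ₗ TensorProduct.map η₂ LinearMap.id ∘ₗ
        (TensorProduct.lid (ZMod 2) B).symm.toLinearMap = LinearMap.id ∧
    φ₂ ∘ₗ δ₂ = δ₂ ∧
    (TensorProduct.assoc (ZMod 2) B B B).toLinearMap ∘ₗ
        (TensorProduct.map δ₂ LinearMap.id) ∘ₗ δ₂ =
      (TensorProduct.map LinearMap.id δ₂) ∘ₗ δ₂ ∧
    (TensorProduct.lid (ZMod 2) B).toLinearMap ∘ₗ
        (TensorProduct.map ε₂ LinearMap.id) ∘ₗ δ₂ = LinearMap.id ∧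
    δ₂ ∘ₗ μ₂ =
      (TensorProduct.map μ₂ LinearMap.id) ∘ₗ
        (TensorProduct.assoc (ZMod 2) B B B).symm.toLinearMap ∘ₗ
        (TensorProduct.map LinearMap.id δ₂) :=
  stmt_8_general A B vm vp wm wp bB hbB0 hbB1 μ₁ hμpp hμpm hμmp hμmm η₁ hη₁ δ₁ hδp hδm ε₁ hε₁p hε₁m
    ι hιp hιm π hπpp hπmm hπpm hπmp mflip hmflip μ₂ hμ₂ δ₂ hδ₂ η₂ hη₂ ε₂ hε₂ φ₂ hφ₂
end

section
/- The maps T₁ and T₇ satisfy the commutation relations: (T₁⊗id_A)∘(id_A⊗T₁) = (id_A⊗T₁)∘(T₁⊗id_A) as maps A⊗A⊗A → A⊗A⊗A, and T₁∘(id_A⊗T₇) = (id_A⊗T₇)∘(T₁⊗id_A) as maps A⊗A⊗A → A⊗A. -/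
/-!
`A` is the Frobenius algebra `R[x]/(x²)` with `v₊ = 1` and `v₋ = x`, so both relations are formal
consequences of associativity, coassociativity and the Frobenius relations
`(id ⊗ μ)(δ ⊗ id) = δμ = (μ ⊗ id)(id ⊗ δ)`. Applying the Frobenius relation in the middle, both sides
of the first identity become the threefold coproduct of the threefold product, and both sides of the
second become `δ μ (μ ⊗ id)`; the Frobenius algebra axioms themselves are checked on a basis.
-/

open TensorProduct LinearMap

section Frobenius

variable {R M : Type*} [CommSemiring R] [AddCommMonoid M] [Module R M]
  (μ : M ⊗[R] M →ₗ[R] M) (δ : M →ₗ[R] M ⊗[R] M)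

local notation "α" => LinearEquiv.toLinearMap (TensorProduct.assoc R M M M)
local notation "α⁻¹" => LinearEquiv.toLinearMap (LinearEquiv.symm (TensorProduct.assoc R M M M))

theorem rTensor_lTensor_commute_of_frobenius
    (hassoc : μ ∘ₗ rTensor M μ = μ ∘ₗ lTensor M μ ∘ₗ α)
    (hcoassoc : α ∘ₗ rTensor M δ ∘ₗ δ = lTensor M δ ∘ₗ δ)
    (hfrobL : lTensor M μ ∘ₗ α ∘ₗ rTensor M δ = δ ∘ₗ μ)
    (hfrobR : rTensor M μ ∘ₗ α⁻¹ ∘ₗ lTensor M δ = δ ∘ₗ μ) :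
    rTensor M (δ ∘ₗ μ) ∘ₗ α⁻¹ ∘ₗ lTensor M (δ ∘ₗ μ) ∘ₗ α =
      α⁻¹ ∘ₗ lTensor M (δ ∘ₗ μ) ∘ₗ α ∘ₗ rTensor M (δ ∘ₗ μ) := by
  have hcoassoc' : rTensor M δ ∘ₗ δ = α⁻¹ ∘ₗ lTensor M δ ∘ₗ δ := by
    rw [← hcoassoc, ← comp_assoc, ← comp_assoc]
    simp
  calc rTensor M (δ ∘ₗ μ) ∘ₗ α⁻¹ ∘ₗ lTensor M (δ ∘ₗ μ) ∘ₗ α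
      = rTensor M δ ∘ₗ (rTensor M μ ∘ₗ α⁻¹ ∘ₗ lTensor M δ) ∘ₗ lTensor M μ ∘ₗ α := by
        simp only [rTensor_comp, lTensor_comp, comp_assoc]
    _ = (rTensor M δ ∘ₗ δ) ∘ₗ μ ∘ₗ lTensor M μ ∘ₗ α := by
        rw [hfrobR, comp_assoc, comp_assoc]
    _ = (α⁻¹ ∘ₗ lTensor M δ ∘ₗ δ) ∘ₗ μ ∘ₗ rTensor M μ := by
        rw [hcoassoc', hassoc]
    _ = α⁻¹ ∘ₗ lTensor M δ ∘ₗ (lTensor M μ ∘ₗ α ∘ₗ rTensor M δ) ∘ₗ rTensor M μ := by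
        rw [hfrobL]; simp only [comp_assoc]
    _ = α⁻¹ ∘ₗ lTensor M (δ ∘ₗ μ) ∘ₗ α ∘ₗ rTensor M (δ ∘ₗ μ) := by
        simp only [rTensor_comp, lTensor_comp, comp_assoc]

theorem comp_lTensor_commute_of_frobenius
    (hassoc : μ ∘ₗ rTensor M μ = μ ∘ₗ lTensor M μ ∘ₗ α)
    (hfrob : lTensor M μ ∘ₗ α ∘ₗ rTensor M δ = δ ∘ₗ μ) :
    (δ ∘ₗ μ) ∘ₗ lTensor M μ ∘ₗ α = lTensor M μ ∘ₗ α ∘ₗ rTensor M (δ ∘ₗ μ) := by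
  calc (δ ∘ₗ μ) ∘ₗ lTensor M μ ∘ₗ α = δ ∘ₗ μ ∘ₗ rTensor M μ := by
        rw [hassoc, comp_assoc]
    _ = (lTensor M μ ∘ₗ α ∘ₗ rTensor M δ) ∘ₗ rTensor M μ := by
        rw [hfrob, comp_assoc]
    _ = lTensor M μ ∘ₗ α ∘ₗ rTensor M (δ ∘ₗ μ) := by
        simp only [rTensor_comp, comp_assoc]

end Frobenius

section Khovanov

variable {R A : Type*} [CommSemiring R] [AddCommMonoid A] [Module R A]
  (b : Module.Basis (Fin 2) R A) {vm vp : A}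

theorem khovanov_mul_assoc (hb0 : b 0 = vm) (hb1 : b 1 = vp)
    {μ : A ⊗[R] A →ₗ[R] A}
    (hμpp : μ (vp ⊗ₜ vp) = vp) (hμpm : μ (vp ⊗ₜ vm) = vm)
    (hμmp : μ (vm ⊗ₜ vp) = vm) (hμmm : μ (vm ⊗ₜ vm) = 0) :
    μ ∘ₗ rTensor A μ = μ ∘ₗ lTensor A μ ∘ₗ (TensorProduct.assoc R A A A).toLinearMap := by
  refine ((b.tensorProduct b).tensorProduct b).ext fun ⟨⟨i, j⟩, k⟩ => ?_
  fin_cases i <;> fin_cases j <;> fin_cases k <;>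
    simp [Module.Basis.tensorProduct_apply, hb0, hb1, hμpp, hμpm, hμmp, hμmm]

theorem khovanov_comul_coassoc (hb0 : b 0 = vm) (hb1 : b 1 = vp)
    {δ : A →ₗ[R] A ⊗[R] A}
    (hδp : δ vp = vp ⊗ₜ vm + vm ⊗ₜ vp) (hδm : δ vm = vm ⊗ₜ vm) :
    (TensorProduct.assoc R A A A).toLinearMap ∘ₗ rTensor A δ ∘ₗ δ = lTensor A δ ∘ₗ δ := by
  refine b.ext fun i => ?_
  fin_cases i <;>
    simp [hb0, hb1, hδp, hδm, tmul_add, add_tmul, add_assoc]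

theorem khovanov_frobenius_left (hb0 : b 0 = vm) (hb1 : b 1 = vp)
    {μ : A ⊗[R] A →ₗ[R] A}
    (hμpp : μ (vp ⊗ₜ vp) = vp) (hμpm : μ (vp ⊗ₜ vm) = vm)
    (hμmp : μ (vm ⊗ₜ vp) = vm) (hμmm : μ (vm ⊗ₜ vm) = 0)
    {δ : A →ₗ[R] A ⊗[R] A}
    (hδp : δ vp = vp ⊗ₜ vm + vm ⊗ₜ vp) (hδm : δ vm = vm ⊗ₜ vm) :
    lTensor A μ ∘ₗ (TensorProduct.assoc R A A A).toLinearMap ∘ₗ rTensor A δ = δ ∘ₗ μ := by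
  refine (b.tensorProduct b).ext fun ⟨i, j⟩ => ?_
  fin_cases i <;> fin_cases j <;>
    simp [Module.Basis.tensorProduct_apply, hb0, hb1, hμpp, hμpm, hμmp, hμmm, hδp, hδm,
      add_tmul]

theorem khovanov_frobenius_right (hb0 : b 0 = vm) (hb1 : b 1 = vp)
    {μ : A ⊗[R] A →ₗ[R] A}
    (hμpp : μ (vp ⊗ₜ vp) = vp) (hμpm : μ (vp ⊗ₜ vm) = vm)
    (hμmp : μ (vm ⊗ₜ vp) = vm) (hμmm : μ (vm ⊗ₜ vm) = 0)
    {δ : A →ₗ[R] A ⊗[R] A}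
    (hδp : δ vp = vp ⊗ₜ vm + vm ⊗ₜ vp) (hδm : δ vm = vm ⊗ₜ vm) :
    rTensor A μ ∘ₗ (TensorProduct.assoc R A A A).symm.toLinearMap ∘ₗ lTensor A δ = δ ∘ₗ μ := by
  refine (b.tensorProduct b).ext fun ⟨i, j⟩ => ?_
  fin_cases i <;> fin_cases j <;>
    simp [Module.Basis.tensorProduct_apply, hb0, hb1, hμpp, hμpm, hμmp, hμmm, hδp, hδm,
      tmul_add]

end Khovanov

/-- commutation relations for T₁ = δ₁∘μ₁ and T₇ = μ₁ on A⊗A⊗A. -/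
theorem stmt_11 (A : Type) [AddCommGroup A] [Module (ZMod 2) A]
    (vm vp : A) (bA : Module.Basis (Fin 2) (ZMod 2) A)
    (hbA0 : bA 0 = vm) (hbA1 : bA 1 = vp)
    (μ₁ : A ⊗[ZMod 2] A →ₗ[ZMod 2] A)
    (hμpp : μ₁ (vp ⊗ₜ vp) = vp) (hμpm : μ₁ (vp ⊗ₜ vm) = vm)
    (hμmp : μ₁ (vm ⊗ₜ vp) = vm) (hμmm : μ₁ (vm ⊗ₜ vm) = 0)
    (δ₁ : A →ₗ[ZMod 2] A ⊗[ZMod 2] A)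
    (hδp : δ₁ vp = vp ⊗ₜ vm + vm ⊗ₜ vp) (hδm : δ₁ vm = vm ⊗ₜ vm) :
    (TensorProduct.map (δ₁ ∘ₗ μ₁) LinearMap.id) ∘ₗ
        (TensorProduct.assoc (ZMod 2) A A A).symm.toLinearMap ∘ₗ
        (TensorProduct.map LinearMap.id (δ₁ ∘ₗ μ₁)) ∘ₗ
        (TensorProduct.assoc (ZMod 2) A A A).toLinearMap =
      (TensorProduct.assoc (ZMod 2) A A A).symm.toLinearMap ∘ₗ
        (TensorProduct.map LinearMap.id (δ₁ ∘ₗ μ₁)) ∘ₗ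
        (TensorProduct.assoc (ZMod 2) A A A).toLinearMap ∘ₗ
        (TensorProduct.map (δ₁ ∘ₗ μ₁) LinearMap.id) ∧
    (δ₁ ∘ₗ μ₁) ∘ₗ (TensorProduct.map LinearMap.id μ₁) ∘ₗ
        (TensorProduct.assoc (ZMod 2) A A A).toLinearMap =
      (TensorProduct.map LinearMap.id μ₁) ∘ₗ
        (TensorProduct.assoc (ZMod 2) A A A).toLinearMap ∘ₗ
        (TensorProduct.map (δ₁ ∘ₗ μ₁) LinearMap.id) := by
  have hassoc := khovanov_mul_assoc bA hbA0 hbA1 hμpp hμpm hμmp hμmm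
  have hcoassoc := khovanov_comul_coassoc bA hbA0 hbA1 hδp hδm
  have hfrobL := khovanov_frobenius_left bA hbA0 hbA1 hμpp hμpm hμmp hμmm hδp hδm
  have hfrobR := khovanov_frobenius_right bA hbA0 hbA1 hμpp hμpm hμmp hμmm hδp hδm
  exact ⟨rTensor_lTensor_commute_of_frobenius μ₁ δ₁ hassoc hcoassoc hfrobL hfrobR,
    comp_lTensor_commute_of_frobenius μ₁ δ₁ hassoc hfrobL⟩
end

section
/- The maps T₁, T₂ and T₃ satisfy: (id_A⊗T₂)∘T₁ = (T₁⊗id_B)∘(id_A⊗T₂) as maps A⊗A → A⊗A⊗B, and T₁∘(id_A⊗T₃) = (id_A⊗T₃)∘(T₁⊗id_B) as maps A⊗A⊗B → A⊗A. -/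
open TensorProduct

/-!
On the given bases, T₂ is `a ↦ a ⊗ w₋` and T₃ is `a ⊗ b ↦ w₊*(b) • a`. Both only create or contract the
B factor, so they commute with any endomorphism of A ⊗ A, in particular with T₁ = δ₁ ∘ μ₁.
-/

namespace TensorProduct

variable {R P M N : Type*} [CommRing R] [AddCommGroup P] [Module R P] [AddCommGroup M] [Module R M]
  [AddCommGroup N] [Module R N]

theorem assoc_tmul_eq_map_id_flip_mk (z : P ⊗[R] M) (n : N) :
    TensorProduct.assoc R P M N (z ⊗ₜ n) = map LinearMap.id ((mk R M N).flip n) z := by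
  induction z using TensorProduct.induction_on with
  | zero => simp
  | tmul x y => simp
  | add z z' hz hz' => simp [add_tmul, hz, hz']

theorem map_id_rid_lTensor_assoc_tmul (φ : N →ₗ[R] R) (z : P ⊗[R] M) (n : N) :
    map LinearMap.id (TensorProduct.rid R M ∘ₗ LinearMap.lTensor M φ)
      (TensorProduct.assoc R P M N (z ⊗ₜ n)) = φ n • z := by
  induction z using TensorProduct.induction_on with
  | zero => simp
  | tmul x y => simp [tmul_smul]
  | add z z' hz hz' => simp [add_tmul, hz, hz']

theorem map_id_flip_mk_comp (f : P ⊗[R] M →ₗ[R] P ⊗[R] M) (n : N) :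
    map LinearMap.id ((mk R M N).flip n) ∘ₗ f =
      (TensorProduct.assoc R P M N).toLinearMap ∘ₗ map f LinearMap.id ∘ₗ
        (TensorProduct.assoc R P M N).symm.toLinearMap ∘ₗ map LinearMap.id ((mk R M N).flip n) := by
  ext x y
  simp [assoc_tmul_eq_map_id_flip_mk]

theorem comp_map_id_rid_lTensor (f : P ⊗[R] M →ₗ[R] P ⊗[R] M) (φ : N →ₗ[R] R) :
    f ∘ₗ map LinearMap.id (TensorProduct.rid R M ∘ₗ LinearMap.lTensor M φ) =
      map LinearMap.id (TensorProduct.rid R M ∘ₗ LinearMap.lTensor M φ) ∘ₗ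
        (TensorProduct.assoc R P M N).toLinearMap ∘ₗ map f LinearMap.id ∘ₗ
        (TensorProduct.assoc R P M N).symm.toLinearMap := by
  ext x y n
  simp [map_id_rid_lTensor_assoc_tmul, tmul_smul]

end TensorProduct

theorem stmt_12_general (A : Type) [AddCommGroup A] [Module (ZMod 2) A]
    (B : Type) [AddCommGroup B] [Module (ZMod 2) B]
    (vm vp : A) (bA : Module.Basis (Fin 2) (ZMod 2) A)
    (hbA0 : bA 0 = vm) (hbA1 : bA 1 = vp)
    (wm wp : B) (bB : Module.Basis (Fin 2) (ZMod 2) B)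
    (hbB0 : bB 0 = wm) (hbB1 : bB 1 = wp)
    (μ₁ : A ⊗[ZMod 2] A →ₗ[ZMod 2] A)
    (δ₁ : A →ₗ[ZMod 2] A ⊗[ZMod 2] A)
    (T₂ : A →ₗ[ZMod 2] A ⊗[ZMod 2] B)
    (hT₂p : T₂ vp = vp ⊗ₜ wm) (hT₂m : T₂ vm = vm ⊗ₜ wm)
    (T₃ : A ⊗[ZMod 2] B →ₗ[ZMod 2] A)
    (hT₃pp : T₃ (vp ⊗ₜ wp) = vp) (hT₃mp : T₃ (vm ⊗ₜ wp) = vm)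
    (hT₃pm : T₃ (vp ⊗ₜ wm) = 0) (hT₃mm : T₃ (vm ⊗ₜ wm) = 0) :
    (TensorProduct.map LinearMap.id T₂) ∘ₗ (δ₁ ∘ₗ μ₁) =
      (TensorProduct.assoc (ZMod 2) A A B).toLinearMap ∘ₗ
        (TensorProduct.map (δ₁ ∘ₗ μ₁) LinearMap.id) ∘ₗ
        (TensorProduct.assoc (ZMod 2) A A B).symm.toLinearMap ∘ₗ
        (TensorProduct.map LinearMap.id T₂) ∧
    (δ₁ ∘ₗ μ₁) ∘ₗ (TensorProduct.map LinearMap.id T₃) =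
      (TensorProduct.map LinearMap.id T₃) ∘ₗ
        (TensorProduct.assoc (ZMod 2) A A B).toLinearMap ∘ₗ
        (TensorProduct.map (δ₁ ∘ₗ μ₁) LinearMap.id) ∘ₗ
        (TensorProduct.assoc (ZMod 2) A A B).symm.toLinearMap := by
  subst hbA0 hbA1 hbB0 hbB1
  have hT₂ : T₂ = (mk (ZMod 2) A B).flip (bB 0) := by
    refine bA.ext fun i => ?_
    fin_cases i <;> simp [hT₂m, hT₂p]
  have hT₃ : T₃ = TensorProduct.rid (ZMod 2) A ∘ₗ LinearMap.lTensor A (bB.coord 1) := by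
    refine (bA.tensorProduct bB).ext fun ⟨i, j⟩ => ?_
    fin_cases i <;> fin_cases j <;> simp [hT₃mm, hT₃mp, hT₃pm, hT₃pp]
  subst hT₂ hT₃
  exact ⟨map_id_flip_mk_comp _ _, comp_map_id_rid_lTensor _ _⟩

/-- commutation relations for T₁ = δ₁∘μ₁ with T₂ and T₃. -/
theorem stmt_12 (A : Type) [AddCommGroup A] [Module (ZMod 2) A]
    (B : Type) [AddCommGroup B] [Module (ZMod 2) B]
    (vm vp : A) (bA : Module.Basis (Fin 2) (ZMod 2) A)
    (hbA0 : bA 0 = vm) (hbA1 : bA 1 = vp)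
    (wm wp : B) (bB : Module.Basis (Fin 2) (ZMod 2) B)
    (hbB0 : bB 0 = wm) (hbB1 : bB 1 = wp)
    (μ₁ : A ⊗[ZMod 2] A →ₗ[ZMod 2] A)
    (hμpp : μ₁ (vp ⊗ₜ vp) = vp) (hμpm : μ₁ (vp ⊗ₜ vm) = vm)
    (hμmp : μ₁ (vm ⊗ₜ vp) = vm) (hμmm : μ₁ (vm ⊗ₜ vm) = 0)
    (δ₁ : A →ₗ[ZMod 2] A ⊗[ZMod 2] A)
    (hδp : δ₁ vp = vp ⊗ₜ vm + vm ⊗ₜ vp) (hδm : δ₁ vm = vm ⊗ₜ vm)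
    (T₂ : A →ₗ[ZMod 2] A ⊗[ZMod 2] B)
    (hT₂p : T₂ vp = vp ⊗ₜ wm) (hT₂m : T₂ vm = vm ⊗ₜ wm)
    (T₃ : A ⊗[ZMod 2] B →ₗ[ZMod 2] A)
    (hT₃pp : T₃ (vp ⊗ₜ wp) = vp) (hT₃mp : T₃ (vm ⊗ₜ wp) = vm)
    (hT₃pm : T₃ (vp ⊗ₜ wm) = 0) (hT₃mm : T₃ (vm ⊗ₜ wm) = 0) :
    (TensorProduct.map LinearMap.id T₂) ∘ₗ (δ₁ ∘ₗ μ₁) =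
      (TensorProduct.assoc (ZMod 2) A A B).toLinearMap ∘ₗ
        (TensorProduct.map (δ₁ ∘ₗ μ₁) LinearMap.id) ∘ₗ
        (TensorProduct.assoc (ZMod 2) A A B).symm.toLinearMap ∘ₗ
        (TensorProduct.map LinearMap.id T₂) ∧
    (δ₁ ∘ₗ μ₁) ∘ₗ (TensorProduct.map LinearMap.id T₃) =
      (TensorProduct.map LinearMap.id T₃) ∘ₗ
        (TensorProduct.assoc (ZMod 2) A A B).toLinearMap ∘ₗ
        (TensorProduct.map (δ₁ ∘ₗ μ₁) LinearMap.id) ∘ₗ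
        (TensorProduct.assoc (ZMod 2) A A B).symm.toLinearMap :=
  stmt_12_general A B vm vp bA hbA0 hbA1 wm wp bB hbB0 hbB1 μ₁ δ₁ T₂ hT₂p hT₂m T₃ hT₃pp hT₃mp hT₃pm
    hT₃mm
end

section
/- The maps T₂, T₃, T₄, T₅ satisfy, as maps A⊗B → A⊗B: T₂∘T₃ = (T₃⊗id_B)∘(id_A⊗φ₂)∘(T₂⊗id_B) = (T₃⊗id_B)∘(id_A⊗T₄) = (id_A⊗T₅)∘(T₂⊗id_B). -/
open TensorProduct

/-
Every vector of A carries a w₋ after T₂, and T₃ reads off the w₊-coordinate: T₂ v = v ⊗ w₋,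
T₃ (v ⊗ w₊) = v and T₃ (v ⊗ w₋) = 0 for all v, not only for basis vectors. Evaluating the four
maps on v ⊗ w± with v arbitrary, each one sends v ⊗ w₊ to v ⊗ w₋ and kills v ⊗ w₋.
-/

theorem TensorProduct.ext_basis_right {R M N P ι : Type*} [CommSemiring R]
    [AddCommMonoid M] [AddCommMonoid N] [AddCommMonoid P] [Module R M] [Module R N] [Module R P]
    (b : Module.Basis ι R N) {f g : M ⊗[R] N →ₗ[R] P}
    (h : ∀ m i, f (m ⊗ₜ b i) = g (m ⊗ₜ b i)) : f = g :=
  TensorProduct.ext <| LinearMap.ext fun m => b.ext fun i => h m i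

theorem stmt_15_general (A : Type) [AddCommGroup A] [Module (ZMod 2) A]
    (B : Type) [AddCommGroup B] [Module (ZMod 2) B]
    (vm vp : A) (bA : Module.Basis (Fin 2) (ZMod 2) A)
    (hbA0 : bA 0 = vm) (hbA1 : bA 1 = vp)
    (wm wp : B) (bB : Module.Basis (Fin 2) (ZMod 2) B)
    (hbB0 : bB 0 = wm) (hbB1 : bB 1 = wp)
    (φ₂ : B ⊗[ZMod 2] B →ₗ[ZMod 2] B ⊗[ZMod 2] B)
    (hφ₂ : ∀ x y : B, φ₂ (x ⊗ₜ y) = y ⊗ₜ x)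
    (T₂ : A →ₗ[ZMod 2] A ⊗[ZMod 2] B)
    (hT₂p : T₂ vp = vp ⊗ₜ wm) (hT₂m : T₂ vm = vm ⊗ₜ wm)
    (T₃ : A ⊗[ZMod 2] B →ₗ[ZMod 2] A)
    (hT₃pp : T₃ (vp ⊗ₜ wp) = vp) (hT₃mp : T₃ (vm ⊗ₜ wp) = vm)
    (hT₃pm : T₃ (vp ⊗ₜ wm) = 0) (hT₃mm : T₃ (vm ⊗ₜ wm) = 0)
    (T₄ : B →ₗ[ZMod 2] B ⊗[ZMod 2] B)
    (hT₄p : T₄ wp = wp ⊗ₜ wm + wm ⊗ₜ wp) (hT₄m : T₄ wm = wm ⊗ₜ wm)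
    (T₅ : B ⊗[ZMod 2] B →ₗ[ZMod 2] B)
    (hT₅mp : T₅ (wm ⊗ₜ wp) = wm) (hT₅mm : T₅ (wm ⊗ₜ wm) = 0) :
    T₂ ∘ₗ T₃ =
      (TensorProduct.map T₃ LinearMap.id) ∘ₗ
        (TensorProduct.assoc (ZMod 2) A B B).symm.toLinearMap ∘ₗ
        (TensorProduct.map LinearMap.id φ₂) ∘ₗ
        (TensorProduct.assoc (ZMod 2) A B B).toLinearMap ∘ₗ
        (TensorProduct.map T₂ LinearMap.id) ∧
    T₂ ∘ₗ T₃ =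
      (TensorProduct.map T₃ LinearMap.id) ∘ₗ
        (TensorProduct.assoc (ZMod 2) A B B).symm.toLinearMap ∘ₗ
        (TensorProduct.map LinearMap.id T₄) ∧
    T₂ ∘ₗ T₃ =
      (TensorProduct.map LinearMap.id T₅) ∘ₗ
        (TensorProduct.assoc (ZMod 2) A B B).toLinearMap ∘ₗ
        (TensorProduct.map T₂ LinearMap.id) := by
  have hT₂ : ∀ v, T₂ v = v ⊗ₜ wm := by
    refine LinearMap.congr_fun (f := T₂) (g := (mk (ZMod 2) A B).flip wm) (bA.ext fun i => ?_)
    fin_cases i <;> simp [hbA0, hbA1, hT₂m, hT₂p]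
  have hT₃p : ∀ v, T₃ (v ⊗ₜ wp) = v := by
    refine LinearMap.congr_fun (f := T₃ ∘ₗ (mk (ZMod 2) A B).flip wp) (g := .id)
      (bA.ext fun i => ?_)
    fin_cases i <;> simp [hbA0, hbA1, hT₃mp, hT₃pp]
  have hT₃m : ∀ v, T₃ (v ⊗ₜ wm) = 0 := by
    refine LinearMap.congr_fun (f := T₃ ∘ₗ (mk (ZMod 2) A B).flip wm) (g := 0)
      (bA.ext fun i => ?_)
    fin_cases i <;> simp [hbA0, hbA1, hT₃mm, hT₃pm]
  refine ⟨?_, ?_, ?_⟩ <;>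
  · refine TensorProduct.ext_basis_right bB fun v i => ?_
    fin_cases i <;>
      simp [hbB0, hbB1, hT₂, hT₃p, hT₃m, hφ₂, hT₄p, hT₄m, hT₅mp, hT₅mm, tmul_add]

/-- relations between T₂, T₃, T₄, T₅ as maps A⊗B → A⊗B. -/
theorem stmt_15 (A : Type) [AddCommGroup A] [Module (ZMod 2) A]
    (B : Type) [AddCommGroup B] [Module (ZMod 2) B]
    (vm vp : A) (bA : Module.Basis (Fin 2) (ZMod 2) A)
    (hbA0 : bA 0 = vm) (hbA1 : bA 1 = vp)
    (wm wp : B) (bB : Module.Basis (Fin 2) (ZMod 2) B)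
    (hbB0 : bB 0 = wm) (hbB1 : bB 1 = wp)
    (φ₂ : B ⊗[ZMod 2] B →ₗ[ZMod 2] B ⊗[ZMod 2] B)
    (hφ₂ : ∀ x y : B, φ₂ (x ⊗ₜ y) = y ⊗ₜ x)
    (T₂ : A →ₗ[ZMod 2] A ⊗[ZMod 2] B)
    (hT₂p : T₂ vp = vp ⊗ₜ wm) (hT₂m : T₂ vm = vm ⊗ₜ wm)
    (T₃ : A ⊗[ZMod 2] B →ₗ[ZMod 2] A)
    (hT₃pp : T₃ (vp ⊗ₜ wp) = vp) (hT₃mp : T₃ (vm ⊗ₜ wp) = vm)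
    (hT₃pm : T₃ (vp ⊗ₜ wm) = 0) (hT₃mm : T₃ (vm ⊗ₜ wm) = 0)
    (T₄ : B →ₗ[ZMod 2] B ⊗[ZMod 2] B)
    (hT₄p : T₄ wp = wp ⊗ₜ wm + wm ⊗ₜ wp) (hT₄m : T₄ wm = wm ⊗ₜ wm)
    (T₅ : B ⊗[ZMod 2] B →ₗ[ZMod 2] B)
    (hT₅pp : T₅ (wp ⊗ₜ wp) = wp) (hT₅pm : T₅ (wp ⊗ₜ wm) = wm)
    (hT₅mp : T₅ (wm ⊗ₜ wp) = wm) (hT₅mm : T₅ (wm ⊗ₜ wm) = 0) :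
    T₂ ∘ₗ T₃ =
      (TensorProduct.map T₃ LinearMap.id) ∘ₗ
        (TensorProduct.assoc (ZMod 2) A B B).symm.toLinearMap ∘ₗ
        (TensorProduct.map LinearMap.id φ₂) ∘ₗ
        (TensorProduct.assoc (ZMod 2) A B B).toLinearMap ∘ₗ
        (TensorProduct.map T₂ LinearMap.id) ∧
    T₂ ∘ₗ T₃ =
      (TensorProduct.map T₃ LinearMap.id) ∘ₗ
        (TensorProduct.assoc (ZMod 2) A B B).symm.toLinearMap ∘ₗ
        (TensorProduct.map LinearMap.id T₄) ∧
    T₂ ∘ₗ T₃ =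
      (TensorProduct.map LinearMap.id T₅) ∘ₗ
        (TensorProduct.assoc (ZMod 2) A B B).toLinearMap ∘ₗ
        (TensorProduct.map T₂ LinearMap.id) :=
  stmt_15_general A B vm vp bA hbA0 hbA1 wm wp bB hbB0 hbB1 φ₂ hφ₂ T₂ hT₂p hT₂m T₃ hT₃pp hT₃mp hT₃pm
    hT₃mm T₄ hT₄p hT₄m T₅ hT₅mp hT₅mm
end
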